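/- arXiv:1708.00393 — 2 statements merged into one kernel-verified Lean document; each statement's English description precedes it below -/
import Mathlib

section
/- Let K be an algebraically closed field of characteristic different from 2, let φ ∈ K be a primitive m-th root of unity, and let m₁,…,m_n be natural numbers such that (φ; m₁,…,m_n) is generic. Let g ≥ 1 and set ξ = diag(φ^{m₁},…,φ^{m_n}, φ^{−m₁},…,φ^{−m_n}) ∈ Sp(2n,K). If (A₁,B₁,…,A_g,B_g) ∈ Sp(2n,K)^{2g} satisfies ∏_{i=1}^{g}[A_i:B_i] = ξ, then every matrix C ∈ Mat_{2n}(K) satisfying Cᵀ J = −J C (i.e., C lies in the symplectic Lie algebra sp(2n,K)) and commuting with every A_i and every B_i must be zero. -/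
/-!
The product of commutators `ξ` commutes with `C`, and by genericity its diagonal entries are
pairwise distinct, so `C` is diagonal. Every `A_i`, `B_i` preserves each eigenspace `V` of `C`, so
`det (ξ|V)` is a product of determinants of commutators, hence `1`. If `C` had an eigenvalue
`c ≠ 0`, then `det (ξ|V) = ∏_J φ^{m_j} / ∏_L φ^{m_l}`, where `J`, `L` index the basis vectors
`e_j`, `f_l` lying in `V`. As `C` is hamiltonian, its entries at `e_i` and `f_i` are opposite, so
`J` and `L` are disjoint (`c ≠ -c`) and not both empty, contradicting genericity.
-/

open Matrix

/-- The standard symplectic structure matrix `J = [[0, I_n], [−I_n, 0]]`. -/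
def sympJ (n : ℕ) (K : Type*) [Field K] :
    Matrix (Fin n ⊕ Fin n) (Fin n ⊕ Fin n) K :=
  Matrix.fromBlocks 0 1 (-1) 0

/-- `A` belongs to `Sp(2n, K)`, i.e. `Aᵀ J A = J`. -/
def IsSymplectic {n : ℕ} {K : Type*} [Field K]
    (A : Matrix (Fin n ⊕ Fin n) (Fin n ⊕ Fin n) K) : Prop :=
  Aᵀ * sympJ n K * A = sympJ n K

/-- `(φ; m₁, …, m_n)` is generic: for all disjoint subsets `J`, `L` of indices, not both
empty, `∏_{j∈J} φ^{m_j} ≠ ∏_{l∈L} φ^{m_l}`, and `φ^{2 m_i} ≠ 1` for every `i`. -/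
def Generic {K : Type*} [Field K] (φ : K) {n : ℕ} (m : Fin n → ℕ) : Prop :=
  (∀ J L : Finset (Fin n), Disjoint J L → (J.Nonempty ∨ L.Nonempty) →
    ∏ j ∈ J, φ ^ m j ≠ ∏ l ∈ L, φ ^ m l) ∧
  ∀ i, φ ^ (2 * m i) ≠ 1

section CompressedDet

variable {ι R : Type*} [Fintype ι] [DecidableEq ι] [CommRing R] {P : Matrix ι ι R}

/-- For an idempotent `P` commuting with `M`, the determinant of `M` on the range of `P`:
`P * M + (1 - P)` acts as `M` there and as the identity on the kernel of `P`. -/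
def compressedDet (P M : Matrix ι ι R) : R := (P * M + (1 - P)).det

@[simp]
lemma compressedDet_one_left (M : Matrix ι ι R) : compressedDet 1 M = M.det := by
  simp [compressedDet]

@[simp]
lemma compressedDet_one (P : Matrix ι ι R) : compressedDet P 1 = 1 := by
  simp [compressedDet]

lemma compressedDet_mul (hP : IsIdempotentElem P) {M : Matrix ι ι R} (hM : Commute P M)
    (N : Matrix ι ι R) : compressedDet P (M * N) = compressedDet P M * compressedDet P N := by
  have hPMP : P * M * P = P * M := by rw [mul_assoc, ← hM.eq, ← mul_assoc, hP.eq]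
  have hPM1P : P * M * (1 - P) = 0 := by rw [mul_sub, hPMP, mul_one, sub_self]
  have hfactor : P * (M * N) + (1 - P) = (P * M + (1 - P)) * (P * N + (1 - P)) := by
    rw [add_mul, mul_add, mul_add, hPM1P, ← mul_assoc (1 - P), hP.one_sub_mul_self,
      hP.one_sub.eq, zero_mul, ← mul_assoc, ← mul_assoc, hPMP, mul_assoc, add_zero, zero_add]
  rw [compressedDet, hfactor, det_mul, compressedDet, compressedDet]

lemma compressedDet_list_prod (hP : IsIdempotentElem P) (L : List (Matrix ι ι R))
    (hL : ∀ M ∈ L, Commute P M) : compressedDet P L.prod = (L.map (compressedDet P)).prod := by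
  induction L with
  | nil => simp
  | cons M L ih =>
    rw [List.prod_cons, compressedDet_mul hP (hL M List.mem_cons_self), List.map_cons,
      List.prod_cons, ih fun N hN => hL N (List.mem_cons_of_mem _ hN)]

lemma commute_nonsing_inv {A : Matrix ι ι R} (hA : IsUnit A.det) (h : Commute P A) :
    Commute P A⁻¹ := by
  let := invertibleOfIsUnitDet A hA
  simpa [invOf_eq_nonsing_inv] using h.invOf_right

lemma commute_commutator {A B : Matrix ι ι R} (hA : IsUnit A.det) (hB : IsUnit B.det)
    (hPA : Commute P A) (hPB : Commute P B) : Commute P (A * B * A⁻¹ * B⁻¹) :=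
  ((hPA.mul_right hPB).mul_right (commute_nonsing_inv hA hPA)).mul_right
    (commute_nonsing_inv hB hPB)

lemma commute_prod_commutators {g : ℕ} {A B : Fin g → Matrix ι ι R}
    (hA : ∀ i, IsUnit (A i).det) (hB : ∀ i, IsUnit (B i).det)
    (hPA : ∀ i, Commute P (A i)) (hPB : ∀ i, Commute P (B i)) :
    Commute P (List.ofFn fun i => A i * B i * (A i)⁻¹ * (B i)⁻¹).prod :=
  Commute.list_prod_right _ _ <| List.forall_mem_ofFn_iff.mpr fun i =>
    commute_commutator (hA i) (hB i) (hPA i) (hPB i)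

lemma compressedDet_commutator (hP : IsIdempotentElem P) {A B : Matrix ι ι R}
    (hA : IsUnit A.det) (hB : IsUnit B.det) (hPA : Commute P A) (hPB : Commute P B) :
    compressedDet P (A * B * A⁻¹ * B⁻¹) = 1 := by
  have hinv : ∀ {X : Matrix ι ι R}, IsUnit X.det → Commute P X →
      compressedDet P X * compressedDet P X⁻¹ = 1 := fun hX hPX => by
    rw [← compressedDet_mul hP hPX, mul_nonsing_inv _ hX, compressedDet_one]
  have hPAB : Commute P (A * B) := hPA.mul_right hPB
  rw [compressedDet_mul hP (hPAB.mul_right (commute_nonsing_inv hA hPA)),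
    compressedDet_mul hP hPAB, compressedDet_mul hP hPA]
  linear_combination (compressedDet P B * compressedDet P B⁻¹) * hinv hA hPA + hinv hB hPB

lemma compressedDet_prod_commutators (hP : IsIdempotentElem P) {g : ℕ}
    {A B : Fin g → Matrix ι ι R} (hA : ∀ i, IsUnit (A i).det) (hB : ∀ i, IsUnit (B i).det)
    (hPA : ∀ i, Commute P (A i)) (hPB : ∀ i, Commute P (B i)) :
    compressedDet P (List.ofFn fun i => A i * B i * (A i)⁻¹ * (B i)⁻¹).prod = 1 := by
  rw [compressedDet_list_prod hP _ (List.forall_mem_ofFn_iff.mpr fun i =>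
      commute_commutator (hA i) (hB i) (hPA i) (hPB i)), List.map_ofFn, List.prod_ofFn]
  exact Finset.prod_eq_one fun i _ => compressedDet_commutator hP (hA i) (hB i) (hPA i) (hPB i)

end CompressedDet

section Diagonal

variable {ι R : Type*} [Fintype ι] [DecidableEq ι] [CommRing R]

lemma apply_eq_zero_of_commute_diagonal [IsDomain R] {M : Matrix ι ι R} {d : ι → R}
    (h : Commute M (diagonal d)) {j k : ι} (hjk : d j ≠ d k) : M j k = 0 := by
  have hjk' := congrFun (congrFun h.eq j) k
  rw [mul_diagonal, diagonal_mul, mul_comm] at hjk'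
  exact (mul_eq_mul_right_iff.mp hjk').resolve_left hjk.symm

lemma eq_diagonal_of_commute_diagonal [IsDomain R] {M : Matrix ι ι R} {d : ι → R}
    (h : Commute M (diagonal d)) (hd : Function.Injective d) : M = diagonal fun j => M j j := by
  ext j k
  obtain rfl | hjk := eq_or_ne j k
  · simp
  · rw [diagonal_apply_ne _ hjk, apply_eq_zero_of_commute_diagonal h (hd.ne hjk)]

lemma Commute.diagonal_comp [IsDomain R] {M : Matrix ι ι R} {d : ι → R}
    (h : Commute M (diagonal d)) (f : R → R) : Commute M (diagonal (f ∘ d)) := by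
  ext j k
  rw [mul_diagonal, diagonal_mul]
  obtain hjk | hjk := eq_or_ne (d j) (d k)
  · simp [hjk, mul_comm]
  · simp [apply_eq_zero_of_commute_diagonal h hjk]

lemma isIdempotentElem_diagonal_ite (p : ι → Prop) [DecidablePred p] :
    IsIdempotentElem (diagonal fun j => if p j then (1 : R) else 0) := by
  rw [IsIdempotentElem, diagonal_mul_diagonal]
  congr! 2 with j
  split_ifs <;> simp

lemma compressedDet_diagonal (p : ι → Prop) [DecidablePred p] (d : ι → R) :
    compressedDet (diagonal fun j => if p j then 1 else 0) (diagonal d) = ∏ j with p j, d j := by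
  have : (diagonal fun j => if p j then 1 else 0) * diagonal d +
      (1 - diagonal fun j => if p j then 1 else 0) = diagonal fun j => if p j then d j else 1 := by
    ext j k
    obtain rfl | hjk := eq_or_ne j k
    · by_cases hj : p j <;> simp [hj]
    · simp [diagonal_apply_ne _ hjk, one_apply_ne hjk]
  rw [compressedDet, this, det_diagonal, Finset.prod_filter]

end Diagonal

lemma sympJ_mul_transpose (n : ℕ) (K : Type*) [Field K] : sympJ n K * (sympJ n K)ᵀ = 1 := by
  simp [sympJ, fromBlocks_transpose, fromBlocks_multiply, ← fromBlocks_one]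

lemma IsSymplectic.isUnit_det {n : ℕ} {K : Type*} [Field K]
    {A : Matrix (Fin n ⊕ Fin n) (Fin n ⊕ Fin n) K} (hA : IsSymplectic A) : IsUnit A.det := by
  have hJ : (sympJ n K).det ≠ 0 := by
    apply left_ne_zero_of_mul_eq_one (b := (sympJ n K)ᵀ.det)
    rw [← det_mul, sympJ_mul_transpose, det_one]
  have h := congrArg det hA
  rw [det_mul, det_mul, det_transpose] at h
  refine isUnit_iff_ne_zero.mpr fun h0 => hJ ?_
  rw [← h, h0, mul_zero]

lemma hamiltonian_apply_inr_inr_ne {n : ℕ} {K : Type*} [Field K] (h2 : (2 : K) ≠ 0)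
    {C : Matrix (Fin n ⊕ Fin n) (Fin n ⊕ Fin n) K}
    (hC : Cᵀ * sympJ n K = -(sympJ n K * C)) {i : Fin n} (hi : C (Sum.inl i) (Sum.inl i) ≠ 0) :
    C (Sum.inr i) (Sum.inr i) ≠ C (Sum.inl i) (Sum.inl i) := by
  have hneg : C (Sum.inl i) (Sum.inl i) = -C (Sum.inr i) (Sum.inr i) := by
    simpa [mul_apply, sympJ, Fintype.sum_sum_type, one_apply] using
      congrFun (congrFun hC (Sum.inl i)) (Sum.inr i)
  intro h
  exact hi <| (mul_eq_zero.mp (by linear_combination hneg - h : (2 : K) * _ = 0)).resolve_left h2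

section Generic

variable {K : Type*} [Field K] {φ : K} {n : ℕ} {mm : Fin n → ℕ}

def torusDiag (φ : K) (mm : Fin n → ℕ) : Fin n ⊕ Fin n → K :=
  Sum.elim (fun i => φ ^ mm i) (fun i => (φ ^ mm i)⁻¹)

lemma prod_filter_torusDiag_eq_one_iff (hφ : φ ≠ 0) (p : Fin n ⊕ Fin n → Prop)
    [DecidablePred p] :
    ∏ j with p j, torusDiag φ mm j = 1 ↔
      ∏ i with p (Sum.inl i), φ ^ mm i = ∏ i with p (Sum.inr i), φ ^ mm i := by
  have hsplit : ∏ j with p j, torusDiag φ mm j =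
      (∏ i with p (Sum.inl i), φ ^ mm i) * (∏ i with p (Sum.inr i), φ ^ mm i)⁻¹ := by
    simp only [Finset.prod_filter, Fintype.prod_sum_type, torusDiag, Sum.elim_inl, Sum.elim_inr,
      ← Finset.prod_inv_distrib, apply_ite (·⁻¹), inv_one]
  rw [hsplit, mul_inv_eq_one₀ (Finset.prod_ne_zero_iff.mpr fun i _ => pow_ne_zero _ hφ)]

lemma Generic.exponent_ne_zero (hgen : Generic φ mm) (i : Fin n) : mm i ≠ 0 := by
  intro h
  exact hgen.2 i (by rw [h, mul_zero, pow_zero])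

lemma Generic.pow_injective (hgen : Generic φ mm) : Function.Injective fun i => φ ^ mm i := by
  intro i i' h
  by_contra hii'
  exact hgen.1 {i} {i'} (Finset.disjoint_singleton.mpr hii') (by simp) (by simpa using h)

lemma Generic.pow_mul_pow_ne_one (hgen : Generic φ mm) (i i' : Fin n) :
    φ ^ mm i * φ ^ mm i' ≠ 1 := by
  obtain rfl | hii' := eq_or_ne i i'
  · rw [← pow_add, ← two_mul]
    exact hgen.2 i
  · simpa [Finset.prod_pair hii'] using hgen.1 {i, i'} ∅ (by simp) (by simp)

lemma Generic.torusDiag_injective (hgen : Generic φ mm) (hφ : φ ≠ 0) :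
    Function.Injective (torusDiag φ mm) := by
  have hpow (i : Fin n) : φ ^ mm i ≠ 0 := pow_ne_zero _ hφ
  rintro (i | i) (i' | i') h <;> simp only [torusDiag, Sum.elim_inl, Sum.elim_inr] at h
  · rw [hgen.pow_injective h]
  · exact absurd (by rw [h, inv_mul_cancel₀ (hpow i')]) (hgen.pow_mul_pow_ne_one i i')
  · exact absurd (by rw [← h, inv_mul_cancel₀ (hpow i)]) (hgen.pow_mul_pow_ne_one i' i)
  · rw [hgen.pow_injective (inv_injective h)]

lemma Generic.ne_zero_of_det_eq_one [Nonempty (Fin n)] (hgen : Generic φ mm)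
    (h : (diagonal (torusDiag φ mm)).det = 1) : φ ≠ 0 := by
  rintro rfl
  obtain ⟨i⟩ := ‹Nonempty (Fin n)›
  rw [det_diagonal, Finset.prod_eq_zero (Finset.mem_univ (Sum.inl i))] at h
  · exact zero_ne_one h
  · simp [torusDiag, hgen.exponent_ne_zero i]

end Generic

theorem statement1_general {K : Type*} [Field K] (h2 : (2 : K) ≠ 0)
    {φ : K}
    {n : ℕ} (mm : Fin n → ℕ) (hgen : Generic φ mm)
    {g : ℕ}
    (ξ : Matrix (Fin n ⊕ Fin n) (Fin n ⊕ Fin n) K)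
    (hξ : ξ = Matrix.diagonal (Sum.elim (fun i => φ ^ mm i) (fun i => (φ ^ mm i)⁻¹)))
    (A B : Fin g → Matrix (Fin n ⊕ Fin n) (Fin n ⊕ Fin n) K)
    (hA : ∀ i, IsSymplectic (A i)) (hB : ∀ i, IsSymplectic (B i))
    (hprod : (List.ofFn (fun i => A i * B i * (A i)⁻¹ * (B i)⁻¹)).prod = ξ)
    (C : Matrix (Fin n ⊕ Fin n) (Fin n ⊕ Fin n) K)
    (hham : Cᵀ * sympJ n K = -(sympJ n K * C))
    (hcommA : ∀ i, C * A i = A i * C) (hcommB : ∀ i, C * B i = B i * C) :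
    C = 0 := by
  classical
  replace hξ : ξ = diagonal (torusDiag φ mm) := hξ
  have hdetA i := (hA i).isUnit_det
  have hdetB i := (hB i).isUnit_det
  have hξP (P : Matrix (Fin n ⊕ Fin n) (Fin n ⊕ Fin n) K) (hP : IsIdempotentElem P)
      (hPC : ∀ X, Commute C X → Commute P X) : compressedDet P ξ = 1 :=
    hprod ▸ compressedDet_prod_commutators hP hdetA hdetB (fun i => hPC _ (hcommA i))
      (fun i => hPC _ (hcommB i))
  cases isEmpty_or_nonempty (Fin n)
  · exact Subsingleton.elim _ _
  have hφ : φ ≠ 0 := hgen.ne_zero_of_det_eq_one <| by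
    rw [← compressedDet_one_left]
    exact hξ ▸ hξP 1 .one fun X _ => .one_left X
  have hCdiag : C = diagonal fun j => C j j := eq_diagonal_of_commute_diagonal
    (hξ ▸ hprod ▸ commute_prod_commutators hdetA hdetB hcommA hcommB)
    (hgen.torusDiag_injective hφ)
  by_contra hC
  obtain ⟨j₀, hj₀⟩ : ∃ j, C j j ≠ 0 := by
    contrapose! hC
    rw [hCdiag]
    simp [hC]
  have hdet := hξP (diagonal fun j => if C j j = C j₀ j₀ then 1 else 0)
    (isIdempotentElem_diagonal_ite _) fun X hX =>
      ((hCdiag ▸ hX.symm).diagonal_comp fun x => if x = C j₀ j₀ then 1 else 0).symm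
  rw [hξ, compressedDet_diagonal, prod_filter_torusDiag_eq_one_iff hφ] at hdet
  refine hgen.1 _ _ (Finset.disjoint_filter.mpr fun i _ hi hi' =>
    hamiltonian_apply_inr_inr_ne h2 hham (hi ▸ hj₀) (hi'.trans hi.symm)) ?_ hdet
  rcases j₀ with i | i
  exacts [.inl ⟨i, by simp⟩, .inr ⟨i, by simp⟩]

theorem statement1 {K : Type*} [Field K] [IsAlgClosed K] (h2 : (2 : K) ≠ 0)
    {m : ℕ} {φ : K} (hφ : IsPrimitiveRoot φ m)
    {n : ℕ} (mm : Fin n → ℕ) (hgen : Generic φ mm)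
    {g : ℕ} (hg : 1 ≤ g)
    (ξ : Matrix (Fin n ⊕ Fin n) (Fin n ⊕ Fin n) K)
    (hξ : ξ = Matrix.diagonal (Sum.elim (fun i => φ ^ mm i) (fun i => (φ ^ mm i)⁻¹)))
    (A B : Fin g → Matrix (Fin n ⊕ Fin n) (Fin n ⊕ Fin n) K)
    (hA : ∀ i, IsSymplectic (A i)) (hB : ∀ i, IsSymplectic (B i))
    (hprod : (List.ofFn (fun i => A i * B i * (A i)⁻¹ * (B i)⁻¹)).prod = ξ)
    (C : Matrix (Fin n ⊕ Fin n) (Fin n ⊕ Fin n) K)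
    (hham : Cᵀ * sympJ n K = -(sympJ n K * C))
    (hcommA : ∀ i, C * A i = A i * C) (hcommB : ∀ i, C * B i = B i * C) :
    C = 0 :=
  statement1_general h2 mm hgen ξ hξ A B hA hB hprod C hham hcommA hcommB
end

section
/- Let (Z₁,…,Z_k) be an independent k-tuple of vectors in {1,−1}^n whose generated subgroup does not contain the constant vector −1, with associated block data {a^h_i}. Fix 1 ≤ j ≤ k and let {b^h_i} be the block data associated to the tuple (Z₁,…,Z_{j−1}, −Z_j, Z_{j+1},…,Z_k), where −Z_j denotes the pointwise negation of Z_j. Then for every h = 1,…,k there exists a permutation λ_h of {1,…,2^h} such that b^h_i = a^h_{λ_h(i)} for all i = 1,…,2^h. -/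
/-- Nested block-size data for `k` levels over `{1,…,n}` (0-indexed levels `0,…,k-1`,
level `h` having `2^(h+1)` blocks): the two top blocks partition `n`, and each block
splits into the two blocks below it. -/
def NestedData (k n : ℕ) (a : ℕ → ℕ → ℕ) : Prop :=
  a 0 0 + a 0 1 = n ∧
  ∀ h i, h + 1 < k → i < 2 ^ (h + 1) → a (h + 1) (2 * i) + a (h + 1) (2 * i + 1) = a h i

/-- The index of the consecutive interval (of lengths `a h 0, a h 1, …`) containing `s`. -/
def blockIdx (a : ℕ → ℕ → ℕ) (h s : ℕ) : ℕ :=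
  Nat.findGreatest (fun i => ∑ j ∈ Finset.range i, a h j ≤ s) (2 ^ (h + 1) - 1)

/-- The nested block vector at level `h`: `1` on odd-indexed intervals (even 0-indexed),
`-1` on even-indexed ones. -/
def blockVec (a : ℕ → ℕ → ℕ) (h n : ℕ) : Fin n → ℤˣ :=
  fun s => if blockIdx a h (s : ℕ) % 2 = 0 then 1 else -1

/-- The action of a permutation `σ` of `{1,…,n}` on a sign vector: `(σ·W)(s) = W(σ⁻¹ s)`. -/
def permAct {n : ℕ} (σ : Equiv.Perm (Fin n)) (W : Fin n → ℤˣ) : Fin n → ℤˣ :=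
  fun s => W (σ⁻¹ s)

/-- A `k`-tuple of sign vectors is in nested block form if it is the tuple of
nested block vectors of some nested block-size data. -/
def InNestedBlockForm (k n : ℕ) (Z : Fin k → Fin n → ℤˣ) : Prop :=
  ∃ a : ℕ → ℕ → ℕ, NestedData k n a ∧ ∀ h : Fin k, Z h = blockVec a (h : ℕ) n


/-!
Block `i` at level `h` of nested block data is exactly the set of points at which
`Z₀, …, Z_h` show the signs given by the binary digits of `i` (most significant first), so
`a h i` counts the points of `{1,…,n}` carrying that sign pattern; a permutation of the
points does not change the counts. Negating `Z_j` toggles digit `h - j` of every pattern,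
so the counts for the new tuple are those for the old one, reindexed by the involution
`i ↦ i xor 2^(h-j)` (the identity when `h < j`).
-/

open Finset

def bitSign (b : Bool) : ℤˣ := if b then -1 else 1

lemma bitSign_not (b : Bool) : bitSign (!b) = -bitSign b := by
  cases b <;> simp [bitSign]

lemma bitSign_injective : Function.Injective bitSign := by
  intro b b' h
  cases b <;> cases b' <;> simp_all [bitSign]

lemma eq_of_testBit_eq_of_lt_two_pow {x y m : ℕ} (hx : x < 2 ^ m) (hy : y < 2 ^ m)
    (h : ∀ p < m, x.testBit p = y.testBit p) : x = y := by
  refine Nat.eq_of_testBit_eq fun p => ?_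
  rcases lt_or_ge p m with hp | hp
  · exact h p hp
  · have hpow : 2 ^ m ≤ 2 ^ p := Nat.pow_le_pow_right two_pos hp
    rw [Nat.testBit_lt_two_pow (hx.trans_le hpow), Nat.testBit_lt_two_pow (hy.trans_le hpow)]

def xorPerm (m c : ℕ) (hc : c < 2 ^ m) : Equiv.Perm (Fin (2 ^ m)) :=
  Function.Involutive.toPerm (fun i => ⟨i ^^^ c, Nat.xor_lt_two_pow i.2 hc⟩)
    fun i => Fin.ext (xor_left_involutive c i)

lemma sum_range_two_mul {M : Type*} [AddCommMonoid M] (f : ℕ → M) (m : ℕ) :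
    ∑ j ∈ range (2 * m), f j = ∑ i ∈ range m, (f (2 * i) + f (2 * i + 1)) := by
  induction m with
  | zero => simp
  | succ m ih =>
    rw [Nat.mul_succ, sum_range_succ, sum_range_succ, sum_range_succ, ih, add_assoc]

def blockStart (a : ℕ → ℕ → ℕ) (h m : ℕ) : ℕ := ∑ j ∈ range m, a h j

lemma blockStart_succ (a : ℕ → ℕ → ℕ) (h m : ℕ) :
    blockStart a h (m + 1) = blockStart a h m + a h m := sum_range_succ _ _

lemma blockStart_mono (a : ℕ → ℕ → ℕ) (h : ℕ) : Monotone (blockStart a h) :=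
  fun _ _ hm => sum_le_sum_of_subset (range_subset_range.mpr hm)

lemma blockIdx_lt (a : ℕ → ℕ → ℕ) (h s : ℕ) : blockIdx a h s < 2 ^ (h + 1) := by
  have hle : blockIdx a h s ≤ 2 ^ (h + 1) - 1 := Nat.findGreatest_le _
  have hpos := Nat.one_le_two_pow (n := h + 1)
  omega

lemma blockVec_apply (a : ℕ → ℕ → ℕ) (h n : ℕ) (s : Fin n) :
    blockVec a h n s = bitSign ((blockIdx a h s).testBit 0) := by
  rcases Nat.mod_two_eq_zero_or_one (blockIdx a h s) with h0 | h0 <;>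
    simp [blockVec, bitSign, Nat.testBit_zero, h0]

def signPatternSet {k n : ℕ} (Z : Fin k → Fin n → ℤˣ) (h i : ℕ) : Finset (Fin n) :=
  {t | ∀ h' : Fin k, (h' : ℕ) ≤ h → Z h' t = bitSign (i.testBit (h - h'))}

namespace NestedData

variable {k n : ℕ} {a : ℕ → ℕ → ℕ}

lemma blockStart_two_mul (ha : NestedData k n a) {h m : ℕ} (hh : h + 1 < k)
    (hm : m ≤ 2 ^ (h + 1)) : blockStart a (h + 1) (2 * m) = blockStart a h m := by
  rw [blockStart, blockStart, sum_range_two_mul]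
  exact sum_congr rfl fun i hi => ha.2 h i hh ((mem_range.mp hi).trans_le hm)

lemma blockStart_two_pow (ha : NestedData k n a) {h : ℕ} (hh : h < k) :
    blockStart a h (2 ^ (h + 1)) = n := by
  induction h with
  | zero => simpa [blockStart, sum_range_succ] using ha.1
  | succ h ih =>
    rw [pow_succ, mul_comm, ha.blockStart_two_mul hh le_rfl, ih (by omega)]

lemma le_blockIdx_iff (ha : NestedData k n a) {h m s : ℕ} (hh : h < k) (hm : m ≤ 2 ^ (h + 1))
    (hs : s < n) : m ≤ blockIdx a h s ↔ blockStart a h m ≤ s := by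
  rcases hm.lt_or_eq with hm | rfl
  · constructor
    · intro hle
      refine (blockStart_mono a h hle).trans ?_
      exact Nat.findGreatest_spec (P := fun i => blockStart a h i ≤ s) (Nat.zero_le _)
        (by simp [blockStart])
    · exact Nat.le_findGreatest (P := fun i => blockStart a h i ≤ s) (by omega)
  · rw [ha.blockStart_two_pow hh]
    have := blockIdx_lt a h s
    omega

lemma blockIdx_eq_iff (ha : NestedData k n a) {h i s : ℕ} (hh : h < k) (hi : i < 2 ^ (h + 1))
    (hs : s < n) : blockIdx a h s = i ↔ blockStart a h i ≤ s ∧ s < blockStart a h (i + 1) := by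
  rw [← ha.le_blockIdx_iff hh hi.le hs, ← not_le, ← ha.le_blockIdx_iff hh hi hs]
  omega

lemma card_blockIdx_eq (ha : NestedData k n a) {h i : ℕ} (hh : h < k) (hi : i < 2 ^ (h + 1)) :
    #{s : Fin n | blockIdx a h s = i} = a h i := by
  have hend : blockStart a h (i + 1) ≤ n :=
    ha.blockStart_two_pow hh ▸ blockStart_mono a h hi
  have hmap : ({s | blockIdx a h s = i} : Finset (Fin n)).map Fin.valEmbedding
      = Ico (blockStart a h i) (blockStart a h (i + 1)) := by
    ext x
    simp only [mem_map, mem_filter, mem_univ, true_and, Fin.valEmbedding_apply, mem_Ico]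
    constructor
    · rintro ⟨s, hs, rfl⟩
      exact (ha.blockIdx_eq_iff hh hi s.2).mp hs
    · intro hx
      exact ⟨⟨x, by omega⟩, (ha.blockIdx_eq_iff hh hi (by omega)).mpr hx, rfl⟩
  rw [← card_map, hmap, Nat.card_Ico, blockStart_succ]
  omega

lemma blockIdx_eq_div_two (ha : NestedData k n a) {h s : ℕ} (hh : h + 1 < k) (hs : s < n) :
    blockIdx a h s = blockIdx a (h + 1) s / 2 := by
  set i := blockIdx a (h + 1) s
  have hi : i < 2 ^ (h + 1 + 1) := blockIdx_lt a (h + 1) s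
  obtain ⟨hlo, hhi⟩ := (ha.blockIdx_eq_iff hh hi hs).mp rfl
  rw [pow_succ] at hi
  rw [ha.blockIdx_eq_iff (by omega) (by omega) hs,
    ← ha.blockStart_two_mul hh (by omega), ← ha.blockStart_two_mul hh (by omega)]
  exact ⟨(blockStart_mono a _ (by omega)).trans hlo,
    hhi.trans_le (blockStart_mono a _ (by omega))⟩

lemma blockIdx_eq_div_two_pow (ha : NestedData k n a) {h' h s : ℕ} (hle : h' ≤ h) (hh : h < k)
    (hs : s < n) : blockIdx a h' s = blockIdx a h s / 2 ^ (h - h') := by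
  obtain ⟨d, rfl⟩ := Nat.exists_eq_add_of_le hle
  induction d with
  | zero => simp
  | succ d ih =>
    simp only [Nat.add_sub_cancel_left] at ih ⊢
    rw [ih (by omega) (by omega), ← add_assoc, ha.blockIdx_eq_div_two (by omega) hs,
      Nat.div_div_eq_div_mul, pow_succ']

lemma blockVec_eq_bitSign (ha : NestedData k n a) {h' h : ℕ} (hle : h' ≤ h) (hh : h < k)
    (s : Fin n) : blockVec a h' n s = bitSign ((blockIdx a h s).testBit (h - h')) := by
  rw [blockVec_apply, ha.blockIdx_eq_div_two_pow hle hh s.2, Nat.testBit_div_two_pow, zero_add]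

lemma blockIdx_eq_iff_blockVec (ha : NestedData k n a) {h i : ℕ} (hh : h < k)
    (hi : i < 2 ^ (h + 1)) (s : Fin n) :
    blockIdx a h s = i ↔
      ∀ h' : Fin k, (h' : ℕ) ≤ h → blockVec a h' n s = bitSign (i.testBit (h - h')) := by
  constructor
  · rintro rfl h' hh'
    exact ha.blockVec_eq_bitSign hh' hh s
  · intro hpat
    refine eq_of_testBit_eq_of_lt_two_pow (blockIdx_lt a h s) hi fun p hp => ?_
    have := hpat ⟨h - p, by omega⟩ (by simp)
    rw [ha.blockVec_eq_bitSign (by simp) hh, Nat.sub_sub_self (by omega)] at this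
    exact bitSign_injective this

lemma eq_card_signPatternSet {Z : Fin k → Fin n → ℤˣ} {σ : Equiv.Perm (Fin n)}
    (ha : NestedData k n a)
    (hσ : ∀ h : Fin k, permAct σ (Z h) = blockVec a (h : ℕ) n) {h i : ℕ} (hh : h < k)
    (hi : i < 2 ^ (h + 1)) : a h i = #(signPatternSet Z h i) := by
  rw [← ha.card_blockIdx_eq hh hi]
  refine card_equiv σ⁻¹ fun s => ?_
  simp only [signPatternSet, mem_filter, mem_univ, true_and, ha.blockIdx_eq_iff_blockVec hh hi,
    ← hσ, permAct]

end NestedData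

def flipMask (j h : ℕ) : ℕ := if j ≤ h then 2 ^ (h - j) else 0

lemma flipMask_lt (j h : ℕ) : flipMask j h < 2 ^ (h + 1) := by
  unfold flipMask
  split
  · exact Nat.pow_lt_pow_right one_lt_two (by omega)
  · positivity

lemma testBit_flipMask {j h h' : ℕ} (hh' : h' ≤ h) :
    (flipMask j h).testBit (h - h') = decide (h' = j) := by
  unfold flipMask
  split
  · rw [Nat.testBit_two_pow, decide_eq_decide]
    omega
  · simp only [Nat.zero_testBit]
    exact (decide_eq_false (by omega)).symm

lemma signPatternSet_update_neg {k n : ℕ} (Z : Fin k → Fin n → ℤˣ) (j : Fin k) (h i : ℕ) :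
    signPatternSet (Function.update Z j fun s => -(Z j s)) h i
      = signPatternSet Z h (i ^^^ flipMask j h) := by
  ext t
  simp only [signPatternSet, mem_filter, mem_univ, true_and]
  refine forall_congr' fun h' => imp_congr_right fun hh' => ?_
  rw [Nat.testBit_xor, testBit_flipMask hh']
  rcases eq_or_ne h' j with rfl | hne
  · simp only [Function.update_self, decide_true, Bool.xor_true, bitSign_not]
    exact neg_eq_iff_eq_neg
  · simp [Function.update_of_ne hne, Fin.val_ne_of_ne hne]

theorem statement6_general {k n : ℕ} (Z : Fin k → Fin n → ℤˣ)
    (j : Fin k) (Z' : Fin k → Fin n → ℤˣ)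
    (hZ' : Z' = Function.update Z j (fun s => -(Z j s)))
    (a b : ℕ → ℕ → ℕ) (σ τ : Equiv.Perm (Fin n))
    (ha : NestedData k n a) (hσ : ∀ h : Fin k, permAct σ (Z h) = blockVec a (h : ℕ) n)
    (hb : NestedData k n b) (hτ : ∀ h : Fin k, permAct τ (Z' h) = blockVec b (h : ℕ) n) :
    ∀ h < k, ∃ e : Equiv.Perm (Fin (2 ^ (h + 1))),
      ∀ i : Fin (2 ^ (h + 1)), b h (i : ℕ) = a h ((e i : Fin (2 ^ (h + 1))) : ℕ) := by
  intro h hh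
  subst hZ'
  refine ⟨xorPerm (h + 1) (flipMask j h) (flipMask_lt j h), fun i => ?_⟩
  rw [hb.eq_card_signPatternSet hτ hh i.2, signPatternSet_update_neg]
  exact (ha.eq_card_signPatternSet hσ hh (Nat.xor_lt_two_pow i.2 (flipMask_lt j h))).symm

theorem statement6 {k n : ℕ} (hk : 1 ≤ k) (Z : Fin k → Fin n → ℤˣ)
    (hind : Nat.card (Subgroup.closure (Set.range Z) : Subgroup (Fin n → ℤˣ)) = 2 ^ k)
    (hneg : (fun _ => -1 : Fin n → ℤˣ) ∉ Subgroup.closure (Set.range Z))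
    (j : Fin k) (Z' : Fin k → Fin n → ℤˣ)
    (hZ' : Z' = Function.update Z j (fun s => -(Z j s)))
    (a b : ℕ → ℕ → ℕ) (σ τ : Equiv.Perm (Fin n))
    (ha : NestedData k n a) (hσ : ∀ h : Fin k, permAct σ (Z h) = blockVec a (h : ℕ) n)
    (hb : NestedData k n b) (hτ : ∀ h : Fin k, permAct τ (Z' h) = blockVec b (h : ℕ) n) :
    ∀ h < k, ∃ e : Equiv.Perm (Fin (2 ^ (h + 1))),
      ∀ i : Fin (2 ^ (h + 1)), b h (i : ℕ) = a h ((e i : Fin (2 ^ (h + 1))) : ℕ) :=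
  statement6_general Z j Z' hZ' a b σ τ ha hσ hb hτ
end
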